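/- With the path-of-length-N relations T, C, K as defined (parameters N, m ∈ ℕ): K N holds if and only if N ≤ 2^m. (Consequently, in the oblivious chase of 𝒯⁰_b(m) the existential rule K(x) ⇒ ∃y R(x,y) is triggered at the last element of the current path of length N exactly when N ≤ 2^m, so the chase builds a path of length exactly 2^m + 1 and terminates.) -/

import Mathlib

/-- The relation `T` on the path `a₀, …, a_N`: `T j j` for `1 ≤ j ≤ N`, and if
`T i j` with `i ≥ 2` and `j ≥ 1` then `T (i - 2) (j - 1)`. -/
inductive Tpath (N : ℕ) : ℕ → ℕ → Prop
  | diag {j : ℕ} : 1 ≤ j → j ≤ N → Tpath N j j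
  | step {i j : ℕ} : Tpath N i j → 2 ≤ i → 1 ≤ j → Tpath N (i - 2) (j - 1)

/-- The relation `C` (first argument: level, second: position): `C l 0` for every
`l ≤ m`, and if `T i j`, `C l i` and `l < m`, then `C (l + 1) j`. -/
inductive Cpath (N m : ℕ) : ℕ → ℕ → Prop
  | base {l : ℕ} : l ≤ m → Cpath N m l 0
  | step {i j l : ℕ} : Tpath N i j → Cpath N m l i → l < m → Cpath N m (l + 1) j

/-- The predicate `K`: `K 0`, and if `C m j` then `K (j + 1)`. -/
inductive Kpath (N m : ℕ) : ℕ → Prop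
  | zero : Kpath N m 0
  | step {j : ℕ} : Cpath N m m j → Kpath N m (j + 1)

/-!
`T i j` holds exactly when `i ≤ j`, `i < 2j` and the distance `N - j` from `j` to the end of
the path is at least half the distance `N - i`. Hence `C l j` with `j ≥ 1` says that `j` lies
before the end of the path at distance at least `N / 2^l`, and `K N` asks whether the
position `N - 1`, at distance `1`, is reached at level `m`, i.e. whether `N ≤ 2^m`.
-/

variable {N m : ℕ}

theorem Tpath.bounds {i j : ℕ} (h : Tpath N i j) : i ≤ j ∧ i < 2 * j ∧ 2 * j ≤ N + i := by
  induction h <;> omega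

theorem Tpath.of_bounds {i j : ℕ} (hij : i ≤ j) (hi : i < 2 * j) (hj : 2 * j ≤ N + i) :
    Tpath N i j := by
  obtain rfl | hlt := hij.eq_or_lt
  · exact .diag (by omega) (by omega)
  · have h : Tpath N (i + 2) (j + 1) := Tpath.of_bounds (by omega) (by omega) (by omega)
    simpa using h.step (by omega) (by omega)
termination_by j - i

theorem Cpath.bounds {l j : ℕ} (h : Cpath N m l j) :
    l ≤ m ∧ (j = 0 ∨ 0 < j ∧ j < N ∧ N ≤ 2 ^ l * (N - j)) := by
  induction h with
  | base hl => exact ⟨hl, .inl rfl⟩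
  | @step i j l hT _ hlm ih =>
    obtain ⟨hij, hi, hj⟩ := hT.bounds
    have halve : N - i ≤ 2 * (N - j) := by omega
    have hscale : 2 ^ l * (N - i) ≤ 2 ^ (l + 1) * (N - j) := by
      rw [pow_succ, mul_assoc]
      exact Nat.mul_le_mul_left _ halve
    refine ⟨hlm, .inr ⟨by omega, ?_⟩⟩
    rcases ih.2 with rfl | ⟨_, hiN, hNi⟩
    · exact ⟨by omega, le_trans (Nat.le_mul_of_pos_left N (by positivity)) hscale⟩
    · exact ⟨by omega, hNi.trans hscale⟩

theorem Cpath.of_bounds {l j : ℕ} (hl : l ≤ m)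
    (hj : j = 0 ∨ 0 < j ∧ j < N ∧ N ≤ 2 ^ l * (N - j)) : Cpath N m l j := by
  induction l generalizing j with
  | zero =>
    obtain rfl : j = 0 := by omega
    exact .base hl
  | succ l ih =>
    rcases hj with rfl | ⟨hj0, hjN, hN⟩
    · exact .base hl
    -- the predecessor `i = 2j - N` (truncated to `0`) is twice as far from the end as `j`
    refine .step (i := 2 * j - N) (Tpath.of_bounds (by omega) (by omega) (by omega))
      (ih (by omega) ?_) (by omega)
    by_cases h2j : 2 * j ≤ N
    · exact .inl (by omega)
    · refine .inr ⟨by omega, by omega, ?_⟩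
      rwa [show N - (2 * j - N) = 2 * (N - j) by omega, ← mul_assoc, ← pow_succ]

theorem cpath_iff {l j : ℕ} :
    Cpath N m l j ↔ l ≤ m ∧ (j = 0 ∨ 0 < j ∧ j < N ∧ N ≤ 2 ^ l * (N - j)) :=
  ⟨Cpath.bounds, fun h => Cpath.of_bounds h.1 h.2⟩

theorem kpath_succ_iff {j : ℕ} : Kpath N m (j + 1) ↔ Cpath N m m j :=
  ⟨fun h => by cases h; assumption, .step⟩

/-- `K N` holds if and only if `N ≤ 2^m`. -/
theorem Kpath_last_iff (N m : ℕ) :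
    Kpath N m N ↔ N ≤ 2 ^ m := by
  cases N with
  | zero => exact iff_of_true .zero (Nat.zero_le _)
  | succ n =>
    rw [kpath_succ_iff, cpath_iff, Nat.add_sub_cancel_left, mul_one]
    have := Nat.one_le_two_pow (n := m)
    omega
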